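/- Let ν ≥ 1/2, K > ν + 1, and let r > 0 satisfy r = Ψ_ν(2Kr), where Ψ_ν(x) = I_{ν+1}(x)/I_ν(x). Then r < √(1 − 1/K). -/

import Mathlib

/-!
Write `F_μ(y) = ∑ yᵐ / (m! Γ(m + μ + 1))`, so that `I_μ(x) = (x/2)^μ F_μ(x²/4)`,
`F_μ' = F_{μ+1}` and `F_μ = (μ + 1) F_{μ+1} + y F_{μ+2}`. At `y = (Kr)²` the equation
`r = Ψ_ν(2Kr)` says exactly `F_ν = K F_{ν+1}`.

The quadratic form `Q_{c,μ} = F_μ² - c F_μ F_{μ+1} - y F_{μ+1}²` has derivative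
`c Q_{μ+1,μ+1} + (2μ + 1 - 2c) F_{μ+1}²` and is positive at `y = 0` when `c < μ + 1`.
Since `Q_{μ,μ} > 0` on `[0, μ]` directly, induction on `⌈y⌉` gives `Q_{μ,μ} > 0` for all
`y ≥ 0`, and then `Q_{ν+1/2,ν} > 0`. Substituting `F_ν = K F_{ν+1}` yields
`y < K² - (ν + 1/2) K ≤ K² - K`, that is `r² < 1 - 1/K`.
-/

open Real Filter Topology

/-- The modified Bessel function of the first kind of real order `ν`. -/
noncomputable def besselI (ν x : ℝ) : ℝ :=
  ∑' m : ℕ, (x / 2) ^ (2 * (m : ℝ) + ν) / ((m.factorial : ℝ) * Real.Gamma ((m : ℝ) + ν + 1))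

/-- `Ψ_ν(x) = I_{ν+1}(x) / I_ν(x)`. -/
noncomputable def psi (ν x : ℝ) : ℝ := besselI (ν + 1) x / besselI ν x

noncomputable def besselCoeff (μ : ℝ) (m : ℕ) : ℝ := ((m.factorial : ℝ) * Gamma (m + μ + 1))⁻¹

noncomputable def besselSeries (μ y : ℝ) : ℝ := ∑' m : ℕ, besselCoeff μ m * y ^ m

section Bessel

variable {μ : ℝ}

lemma besselCoeff_pos (hμ : 0 ≤ μ) (m : ℕ) : 0 < besselCoeff μ m := by
  have := Gamma_pos_of_pos (by positivity : (0 : ℝ) < m + μ + 1)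
  unfold besselCoeff
  positivity

lemma Gamma_add_one_le_Gamma_nat_add (hμ : 0 ≤ μ) (m : ℕ) :
    Gamma (μ + 1) ≤ Gamma (m + μ + 1) := by
  induction m with
  | zero => simp
  | succ n ih =>
    have hΓ := Gamma_pos_of_pos (by positivity : (0 : ℝ) < n + μ + 1)
    rw [show ((n + 1 : ℕ) : ℝ) + μ + 1 = (n + μ + 1) + 1 by push_cast; ring,
      Gamma_add_one (s := n + μ + 1) (by positivity)]
    nlinarith [(Nat.cast_nonneg n : (0 : ℝ) ≤ n)]

lemma besselCoeff_le (hμ : 0 ≤ μ) (m : ℕ) :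
    besselCoeff μ m ≤ (m.factorial : ℝ)⁻¹ * (Gamma (μ + 1))⁻¹ := by
  have := Gamma_pos_of_pos (by positivity : (0 : ℝ) < μ + 1)
  rw [besselCoeff, mul_inv]
  gcongr
  exact Gamma_add_one_le_Gamma_nat_add hμ m

lemma succ_mul_besselCoeff_succ (μ : ℝ) (m : ℕ) :
    (m + 1 : ℝ) * besselCoeff μ (m + 1) = besselCoeff (μ + 1) m := by
  rw [besselCoeff, besselCoeff, Nat.factorial_succ]
  push_cast
  rw [show (m + 1 : ℝ) + μ + 1 = m + (μ + 1) + 1 by ring, mul_assoc, mul_inv,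
    ← mul_assoc, mul_inv_cancel₀ (by positivity), one_mul]

lemma besselCoeff_eq_mul_besselCoeff_add_one (hμ : 0 ≤ μ) (m : ℕ) :
    besselCoeff μ m = (m + μ + 1) * besselCoeff (μ + 1) m := by
  have hpos : (0 : ℝ) < m + μ + 1 := by positivity
  have := Gamma_pos_of_pos hpos
  rw [besselCoeff, besselCoeff, show (m : ℝ) + (μ + 1) + 1 = (m + μ + 1) + 1 by ring,
    Gamma_add_one hpos.ne']
  field_simp

lemma summable_besselCoeff_mul_pow (hμ : 0 ≤ μ) (y : ℝ) :
    Summable fun m : ℕ => besselCoeff μ m * y ^ m := by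
  refine .of_norm_bounded ((summable_pow_div_factorial |y|).mul_right (Gamma (μ + 1))⁻¹)
    fun m => ?_
  simp only [norm_mul, norm_pow, Real.norm_eq_abs, abs_of_pos (besselCoeff_pos hμ m)]
  rw [div_eq_inv_mul, mul_right_comm]
  gcongr
  exact besselCoeff_le hμ m

lemma summable_besselCoeff_mul_pow_sub_one (hμ : 0 ≤ μ) (y : ℝ) :
    Summable fun m : ℕ => m * besselCoeff μ m * y ^ (m - 1) := by
  rw [← summable_nat_add_iff 1]
  simpa [succ_mul_besselCoeff_succ] using summable_besselCoeff_mul_pow (by linarith : 0 ≤ μ + 1) y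

lemma tsum_besselCoeff_mul_pow_sub_one (hμ : 0 ≤ μ) (y : ℝ) :
    ∑' m : ℕ, m * besselCoeff μ m * y ^ (m - 1) = besselSeries (μ + 1) y := by
  rw [(summable_besselCoeff_mul_pow_sub_one hμ y).tsum_eq_zero_add]
  simp [besselSeries, succ_mul_besselCoeff_succ]

lemma hasDerivAt_besselSeries (hμ : 0 ≤ μ) (y : ℝ) :
    HasDerivAt (besselSeries μ) (besselSeries (μ + 1) y) y := by
  have hy : y ∈ Metric.ball (0 : ℝ) (|y| + 1) := by simp
  rw [← tsum_besselCoeff_mul_pow_sub_one hμ y]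
  refine hasDerivAt_tsum_of_isPreconnected (g := fun m z => besselCoeff μ m * z ^ m)
    (g' := fun m z => m * besselCoeff μ m * z ^ (m - 1))
    (summable_besselCoeff_mul_pow_sub_one hμ (|y| + 1)) Metric.isOpen_ball
    (convex_ball 0 _).isPreconnected
    (fun m z _ => ?_) (fun m z hz => ?_) (Metric.mem_ball_self (by positivity))
    (summable_besselCoeff_mul_pow hμ 0) hy
  · simpa [mul_assoc, mul_left_comm] using (hasDerivAt_pow m z).const_mul (besselCoeff μ m)
  · have hz' : |z| ≤ |y| + 1 := (mem_ball_zero_iff.mp hz).le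
    have := besselCoeff_pos hμ m
    simp only [norm_mul, norm_pow, Real.norm_eq_abs, Nat.abs_cast, abs_of_pos this]
    gcongr

lemma besselSeries_pos (hμ : 0 ≤ μ) {y : ℝ} (hy : 0 ≤ y) : 0 < besselSeries μ y :=
  (summable_besselCoeff_mul_pow hμ y).tsum_pos
    (fun m => mul_nonneg (besselCoeff_pos hμ m).le (pow_nonneg hy m)) 0
    (by simpa using besselCoeff_pos hμ 0)

lemma besselSeries_zero (μ : ℝ) : besselSeries μ 0 = (Gamma (μ + 1))⁻¹ := by
  rw [besselSeries, tsum_eq_single 0 fun m hm => by simp [hm]]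
  simp [besselCoeff]

lemma besselSeries_eq_add (hμ : 0 ≤ μ) (y : ℝ) :
    besselSeries μ y = (μ + 1) * besselSeries (μ + 1) y + y * besselSeries (μ + 2) y := by
  have hμ1 : 0 ≤ μ + 1 := by linarith
  rw [show μ + 2 = μ + 1 + 1 by ring, ← tsum_besselCoeff_mul_pow_sub_one hμ1, besselSeries,
    besselSeries, ← tsum_mul_left, ← tsum_mul_left,
    ← ((summable_besselCoeff_mul_pow hμ1 y).mul_left _).tsum_add
      ((summable_besselCoeff_mul_pow_sub_one hμ1 y).mul_left _)]
  refine tsum_congr fun m => ?_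
  rw [besselCoeff_eq_mul_besselCoeff_add_one hμ]
  rcases m with _ | m
  · simp
  · simp only [Nat.add_sub_cancel, pow_succ]
    push_cast
    ring

lemma mul_besselSeries_add_one_le (hμ : 0 ≤ μ) {y : ℝ} (hy : 0 ≤ y) :
    (μ + 1) * besselSeries (μ + 1) y ≤ besselSeries μ y := by
  have := besselSeries_pos (by linarith : 0 ≤ μ + 2) hy
  rw [besselSeries_eq_add hμ y]
  nlinarith

noncomputable def besselQuad (c μ y : ℝ) : ℝ :=
  besselSeries μ y ^ 2 - c * besselSeries μ y * besselSeries (μ + 1) y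
    - y * besselSeries (μ + 1) y ^ 2

lemma hasDerivAt_besselQuad (hμ : 0 ≤ μ) (c y : ℝ) :
    HasDerivAt (besselQuad c μ)
      (c * besselQuad (μ + 1) (μ + 1) y + (2 * μ + 1 - 2 * c) * besselSeries (μ + 1) y ^ 2) y := by
  have h₀ := hasDerivAt_besselSeries hμ y
  have h₁ := hasDerivAt_besselSeries (by linarith : 0 ≤ μ + 1) y
  rw [show μ + 1 + 1 = μ + 2 by ring] at h₁
  refine (((h₀.fun_pow 2).fun_sub ((h₀.const_mul c).fun_mul h₁)).fun_sub
    ((hasDerivAt_id' y).fun_mul (h₁.fun_pow 2))).congr_deriv ?_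
  rw [besselQuad, show μ + 1 + 1 = μ + 2 by ring]
  linear_combination (2 * besselSeries (μ + 1) y - c * besselSeries (μ + 2) y) *
      besselSeries_eq_add hμ y

lemma besselQuad_zero_pos {c : ℝ} (hμ : 0 ≤ μ) (hc : c < μ + 1) : 0 < besselQuad c μ 0 := by
  have hΓ := Gamma_pos_of_pos (by linarith : 0 < μ + 1)
  rw [besselQuad, besselSeries_zero, besselSeries_zero,
    show μ + 1 + 1 = (μ + 1) + 1 by ring, Gamma_add_one (s := μ + 1) (by linarith)]
  have : (Gamma (μ + 1))⁻¹ ^ 2 - c * (Gamma (μ + 1))⁻¹ * ((μ + 1) * Gamma (μ + 1))⁻¹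
      - 0 * ((μ + 1) * Gamma (μ + 1))⁻¹ ^ 2 = (μ + 1 - c) / ((μ + 1) * Gamma (μ + 1) ^ 2) := by
    field_simp
    ring
  rw [this]
  exact div_pos (by linarith) (by positivity)

lemma besselQuad_pos_of_forall_besselQuad_add_one_pos {c y : ℝ} (hμ : 0 ≤ μ) (hc₀ : 0 ≤ c)
    (hc : c ≤ μ + 1 / 2) (hy : 0 ≤ y) (h : ∀ z ∈ Set.Icc 0 y, 0 < besselQuad (μ + 1) (μ + 1) z) :
    0 < besselQuad c μ y := by
  have hderiv := hasDerivAt_besselQuad hμ c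
  have hmono : MonotoneOn (besselQuad c μ) (Set.Icc 0 y) := by
    refine monotoneOn_of_deriv_nonneg (convex_Icc 0 y)
      (fun z _ => (hderiv z).continuousAt.continuousWithinAt)
      (fun z _ => (hderiv z).differentiableAt.differentiableWithinAt) fun z hz => ?_
    rw [(hderiv z).deriv]
    have := h z (interior_subset hz)
    have : 0 ≤ 2 * μ + 1 - 2 * c := by linarith
    positivity
  exact (besselQuad_zero_pos hμ (by linarith)).trans_le
    (hmono (Set.left_mem_Icc.mpr hy) (Set.right_mem_Icc.mpr hy) hy)

lemma besselQuad_self_pos_of_le (hμ : 0 ≤ μ) {y : ℝ} (hy : 0 ≤ y) (hyμ : y ≤ μ) :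
    0 < besselQuad μ μ y := by
  have h₀ := besselSeries_pos hμ hy
  have h₁ := besselSeries_pos (by linarith : 0 ≤ μ + 1) hy
  have hle := mul_besselSeries_add_one_le hμ hy
  rw [besselQuad]
  nlinarith [mul_le_mul_of_nonneg_left hle h₀.le, mul_le_mul_of_nonneg_left hle h₁.le,
    mul_pos h₁ h₁]

lemma besselQuad_self_pos_of_le_add_nat (N : ℕ) (hμ : 0 ≤ μ) {y : ℝ} (hy : 0 ≤ y)
    (hyN : y ≤ μ + N) : 0 < besselQuad μ μ y := by
  induction N generalizing μ y with
  | zero => exact besselQuad_self_pos_of_le hμ hy (by simpa using hyN)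
  | succ N ih =>
    refine besselQuad_pos_of_forall_besselQuad_add_one_pos hμ hμ (by linarith) hy fun z hz => ?_
    exact ih (by linarith) hz.1 (by push_cast at hyN; linarith [hz.2])

lemma besselQuad_self_pos (hμ : 0 ≤ μ) {y : ℝ} (hy : 0 ≤ y) : 0 < besselQuad μ μ y :=
  besselQuad_self_pos_of_le_add_nat ⌈y⌉₊ hμ hy (by linarith [Nat.le_ceil y])

end Bessel

lemma besselI_eq_rpow_mul_besselSeries (ν : ℝ) {x : ℝ} (hx : 0 < x) :
    besselI ν x = (x / 2) ^ ν * besselSeries ν ((x / 2) ^ 2) := by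
  rw [besselI, besselSeries, ← tsum_mul_left]
  refine tsum_congr fun m => ?_
  rw [show 2 * (m : ℝ) + ν = ((2 * m : ℕ) : ℝ) + ν by push_cast; ring,
    rpow_add (by positivity), rpow_natCast, pow_mul, besselCoeff]
  ring

lemma psi_eq_mul_div_besselSeries (ν : ℝ) {x : ℝ} (hx : 0 < x) :
    psi ν x = x / 2 * besselSeries (ν + 1) ((x / 2) ^ 2) / besselSeries ν ((x / 2) ^ 2) := by
  have : 0 < (x / 2) ^ ν := by positivity
  rw [psi, besselI_eq_rpow_mul_besselSeries _ hx, besselI_eq_rpow_mul_besselSeries _ hx,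
    rpow_add_one (by positivity), mul_right_comm, mul_assoc, mul_div_mul_left _ _ this.ne',
    mul_comm]

lemma lt_sq_sub_of_besselSeries_eq_mul {ν K y : ℝ} (hν : 0 ≤ ν) (hy : 0 ≤ y)
    (hK : besselSeries ν y = K * besselSeries (ν + 1) y) : y < K ^ 2 - (ν + 1 / 2) * K := by
  have hquad := besselQuad_pos_of_forall_besselQuad_add_one_pos hν (by linarith) le_rfl hy
    fun z hz => besselQuad_self_pos (by linarith) hz.1
  have hF := besselSeries_pos (by linarith : 0 ≤ ν + 1) hy
  rw [besselQuad, hK] at hquad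
  nlinarith [mul_pos hF hF]

theorem stmt_16 (ν K r : ℝ) (hν : 1 / 2 ≤ ν) (hK : ν + 1 < K) (hr : 0 < r)
    (heq : r = psi ν (2 * K * r)) :
    r < Real.sqrt (1 - 1 / K) := by
  have hK₀ : 0 < K := by linarith
  have hx : 0 < 2 * K * r := by positivity
  rw [psi_eq_mul_div_besselSeries ν hx, show 2 * K * r / 2 = K * r by ring] at heq
  have hF₀ := besselSeries_pos (μ := ν) (by linarith) (sq_nonneg (K * r))
  have hratio : besselSeries ν ((K * r) ^ 2) = K * besselSeries (ν + 1) ((K * r) ^ 2) := by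
    rw [eq_div_iff hF₀.ne'] at heq
    exact mul_left_cancel₀ hr.ne' (by linear_combination heq)
  have hlt := lt_sq_sub_of_besselSeries_eq_mul (by linarith) (sq_nonneg _) hratio
  refine lt_sqrt_of_sq_lt ?_
  rw [lt_sub_comm, div_lt_iff₀ hK₀]
  nlinarith
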